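/- arXiv:math/0210216 — 2 statements merged into one kernel-verified Lean document; each statement's English description precedes it below -/
import Mathlib

section
/- For all i and every point (x,v): Ǔ_i(x, L(x,v)) = U_i(x,v); that is, the p-representation covector Ǔ_i = Q_i + Σ_s (∇_i V^s) p_s composed with λ equals the v-representation covector U_i = Σ_q v^q ∇_q L_i − Σ_q L^q ∇_i L_q + F_i. -/
/- Coordinate formalization of extended tensor fields in v- and p-representation
   for a generalized Legendre transformation λ(x,v) = (x, L(x,v)). -/

noncomputable section

open scoped BigOperators

/-- A point of the (co)tangent bundle in a single chart: a pair (x, v) or (x, p). -/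
abbrev Pt (n : ℕ) := (Fin n → ℝ) × (Fin n → ℝ)

/-- An indexed family of scalar functions (components of a (co)vector field). -/
abbrev Fam (n : ℕ) := Fin n → Pt n → ℝ

/-- Components Γ^k_{ij} of an extended connection (or of a gauge tensor T^k_{ij}). -/
abbrev Conn (n : ℕ) := Fin n → Fin n → Fin n → Pt n → ℝ

variable {n : ℕ}

/-- Kronecker delta δ^i_j. -/
def kron (i j : Fin n) : ℝ := if i = j then 1 else 0

/-- Partial derivative ∂f/∂x^m (first slot). -/
def pdx (m : Fin n) (f : Pt n → ℝ) (q : Pt n) : ℝ :=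
  fderiv ℝ f q (Pi.single m 1, 0)

/-- Partial derivative ∂f/∂v^m (resp. ∂f/∂p_m): second slot. -/
def pdv (m : Fin n) (f : Pt n → ℝ) (q : Pt n) : ℝ :=
  fderiv ℝ f q (0, Pi.single m 1)

/-- The generalized Legendre transformation λ(x,v) = (x, L(x,v)). -/
def lam (L : Fam n) (q : Pt n) : Pt n := (q.1, fun i => L i q)

/-- The inverse map λ⁻¹(x,p) = (x, V(x,p)). -/
def lamInv (V : Fam n) (q : Pt n) : Pt n := (q.1, fun i => V i q)

/-- g_{rk} = ∂L_r/∂v^k. -/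
def gdn (L : Fam n) (r k : Fin n) (q : Pt n) : ℝ := pdv k (L r) q

/-- L^i = Σ_q L_q g^{qi}. -/
def Lup (L : Fam n) (ginv : Fin n → Fin n → Pt n → ℝ) (i : Fin n) (q : Pt n) : ℝ :=
  ∑ j, L j q * ginv j i q

/-- |L|² = Σ_s L_s L^s. -/
def L2 (L : Fam n) (ginv : Fin n → Fin n → Pt n → ℝ) (q : Pt n) : ℝ :=
  ∑ s, L s q * Lup L ginv s q

/-- p-representation: W^i = Σ_s p_s ∂V^s/∂p_i. -/
def Wp (V : Fam n) (i : Fin n) (q : Pt n) : ℝ :=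
  ∑ s, q.2 s * pdv i (V s) q

/-- p-representation: Ω = Σ_s p_s W^s. -/
def Omga (V : Fam n) (q : Pt n) : ℝ := ∑ s, q.2 s * Wp V s q

/-- p-representation projector P̌^i_j = δ^i_j − W^i p_j / Ω. -/
def Pp (V : Fam n) (i j : Fin n) (q : Pt n) : ℝ :=
  kron i j - Wp V i q * q.2 j / Omga V q

/-- v-representation projector P^i_j = δ^i_j − L^i L_j / |L|². -/
def Pv (L : Fam n) (ginv : Fin n → Fin n → Pt n → ℝ) (i j : Fin n) (q : Pt n) : ℝ :=
  kron i j - Lup L ginv i q * L j q / L2 L ginv q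

/-- Scalar part of the v-representation horizontal covariant derivative:
    ∂f/∂x^m − Σ_{a,b} v^a Γ^b_{am} ∂f/∂v^b. -/
def vS (Γ : Conn n) (m : Fin n) (f : Pt n → ℝ) (q : Pt n) : ℝ :=
  pdx m f q - ∑ a, ∑ b, q.2 a * Γ b a m q * pdv b f q

/-- v-representation ∇_m X_j of a covector field. -/
def vCov (Γ : Conn n) (m : Fin n) (X : Fam n) (j : Fin n) (q : Pt n) : ℝ :=
  vS Γ m (X j) q - ∑ b, Γ b m j q * X b q

/-- v-representation ∇_m X^i of a vector field. -/
def vVec (Γ : Conn n) (m : Fin n) (X : Fam n) (i : Fin n) (q : Pt n) : ℝ :=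
  vS Γ m (X i) q + ∑ a, Γ i m a q * X a q

/-- v-representation ∇_k Y_{m r} of a (0,2) tensor field. -/
def vCov2 (Γ : Conn n) (k : Fin n) (Y : Fin n → Fin n → Pt n → ℝ)
    (m r : Fin n) (q : Pt n) : ℝ :=
  vS Γ k (Y m r) q - (∑ b, Γ b k m q * Y b r q) - (∑ b, Γ b k r q * Y m b q)

/-- v-representation ∇_m T^k_{ij} of a (1,2) tensor field. -/
def vT12 (Γ : Conn n) (m : Fin n) (T : Conn n) (k i j : Fin n) (q : Pt n) : ℝ :=
  vS Γ m (T k i j) q + (∑ a, Γ k m a q * T a i j q)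
    - (∑ b, Γ b m i q * T k b j q) - (∑ b, Γ b m j q * T k i b q)

/-- Connection components in p-representation: Γ^k_{ij} ∘ λ⁻¹. -/
def Gp (Γ : Conn n) (V : Fam n) (k i j : Fin n) (q : Pt n) : ℝ :=
  Γ k i j (lamInv V q)

/-- Scalar part of the p-representation horizontal covariant derivative:
    ∂f/∂x^m + Σ_{a,b} p_a Γ^a_{mb} ∂f/∂p_b. -/
def pS (G : Conn n) (m : Fin n) (f : Pt n → ℝ) (q : Pt n) : ℝ :=
  pdx m f q + ∑ a, ∑ b, q.2 a * G a m b q * pdv b f q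

/-- p-representation ∇_m X_j of a covector field. -/
def pCov (G : Conn n) (m : Fin n) (X : Fam n) (j : Fin n) (q : Pt n) : ℝ :=
  pS G m (X j) q - ∑ b, G b m j q * X b q

/-- p-representation ∇_m X^i of a vector field. -/
def pVec (G : Conn n) (m : Fin n) (X : Fam n) (i : Fin n) (q : Pt n) : ℝ :=
  pS G m (X i) q + ∑ a, G i m a q * X a q

/-- Force vector F^i = Φ^i + Σ_{j,k} Γ^i_{jk} v^j v^k. -/
def Fvec (Γ : Conn n) (Φ : Fam n) (i : Fin n) (q : Pt n) : ℝ :=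
  Φ i q + ∑ j, ∑ k, Γ i j k q * q.2 j * q.2 k

/-- Force covector F_q = Σ_i g_{qi} F^i. -/
def Fcov (L : Fam n) (Γ : Conn n) (Φ : Fam n) (i : Fin n) (q : Pt n) : ℝ :=
  ∑ j, gdn L i j q * Fvec Γ Φ j q

/-- p-representation force covector Q_i = Θ_i − Σ_{j,k} Γ^k_{ij} V^j p_k. -/
def Qp (Θ : Fam n) (Γ : Conn n) (V : Fam n) (i : Fin n) (q : Pt n) : ℝ :=
  Θ i q - ∑ j, ∑ k, Gp Γ V k i j q * V j q * q.2 k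

/-- p-representation covector Ǔ_i = Q_i + Σ_s (∇_i V^s) p_s. -/
def Ucheck (Θ : Fam n) (Γ : Conn n) (V : Fam n) (i : Fin n) (q : Pt n) : ℝ :=
  Qp Θ Γ V i q + ∑ s, pVec (Gp Γ V) i V s q * q.2 s

/-- v-representation covector U_i = Σ_q v^q ∇_q L_i − Σ_q L^q ∇_i L_q + F_i. -/
def Uv (L : Fam n) (ginv : Fin n → Fin n → Pt n → ℝ) (Γ : Conn n) (Φ : Fam n)
    (i : Fin n) (q : Pt n) : ℝ :=
  (∑ j, q.2 j * vCov Γ j L i q) - (∑ j, Lup L ginv j q * vCov Γ i L j q) + Fcov L Γ Φ i q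

/-- v-representation dynamic curvature tensor D^k_{rij} = −∂Γ^k_{ir}/∂v^j. -/
def Dv (Γ : Conn n) (k r i j : Fin n) (q : Pt n) : ℝ := -(pdv j (Γ k i r) q)

/-- v-representation curvature tensor R^k_{rij}. -/
def Rv (Γ : Conn n) (k r i j : Fin n) (q : Pt n) : ℝ :=
  pdx i (Γ k j r) q - pdx j (Γ k i r) q
  + (∑ m, (Γ k i m q * Γ m j r q - Γ k j m q * Γ m i r q))
  - (∑ m, ∑ s, q.2 s * Γ m i s q * pdv m (Γ k j r) q)
  + (∑ m, ∑ s, q.2 s * Γ m j s q * pdv m (Γ k i r) q)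

/-- p-representation dynamic curvature tensor Ď^{kr}_{ij} = −∂Γ^k_{ij}/∂p_r. -/
def Dp (G : Conn n) (k r i j : Fin n) (q : Pt n) : ℝ := -(pdv r (G k i j) q)

/-- p-representation curvature tensor Ř^k_{rij}. -/
def Rp (G : Conn n) (k r i j : Fin n) (q : Pt n) : ℝ :=
  pdx i (G k j r) q - pdx j (G k i r) q
  + (∑ m, (G k i m q * G m j r q - G k j m q * G m i r q))
  + (∑ m, ∑ s, q.2 s * G s m i q * pdv m (G k j r) q)
  - (∑ m, ∑ s, q.2 s * G s m j q * pdv m (G k i r) q)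

/-- p-representation vector field α̌^k. -/
def alphaCheck (Θ : Fam n) (Γ : Conn n) (V : Fam n) (k : Fin n) (q : Pt n) : ℝ :=
  (∑ r, pdv k (V r) q * Ucheck Θ Γ V r q)
  + (∑ r, pVec (Gp Γ V) r (Wp V) k q * V r q)
  + (∑ r, pdv r (Wp V k) q * Qp Θ Γ V r q)
  + (∑ r, Wp V r q * pdv k (Qp Θ Γ V r) q)
  - (∑ r, ∑ s, ∑ j, q.2 s * Dp (Gp Γ V) s k r j q * Wp V r q * V j q)

/-- v-representation vector field α^k. -/
def alphaV (L : Fam n) (ginv : Fin n → Fin n → Pt n → ℝ) (Γ : Conn n) (Φ : Fam n)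
    (k : Fin n) (q : Pt n) : ℝ :=
  (∑ r, ginv r k q * Uv L ginv Γ Φ r q)
  + (∑ r, q.2 r * vVec Γ r (Lup L ginv) k q)
  + (∑ j, Fvec Γ Φ j q * pdv j (Lup L ginv k) q)
  + (∑ j, ∑ r, ∑ s, Lup L ginv r q * ginv j k q * q.2 s * pdv j (vCov Γ s L r) q)
  + (∑ j, ∑ r, Lup L ginv r q * ginv j k q * pdv j (Fcov L Γ Φ r) q)
  + (∑ j, ∑ r, Lup L ginv r q * ginv j k q * vCov Γ j L r q)
  - (∑ j, ∑ m, ∑ r, ∑ s, ginv m k q * L s q * Dv Γ s r j m q * Lup L ginv r q * q.2 j)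

/-- p-representation covector field β̌_k. -/
def betaCheck (Θ : Fam n) (Γ : Conn n) (V : Fam n) (k : Fin n) (q : Pt n) : ℝ :=
  (∑ r, pCov (Gp Γ V) r (Ucheck Θ Γ V) k q * V r q)
  + (∑ r, pdv r (Ucheck Θ Γ V k) q * Qp Θ Γ V r q)
  + (∑ r, pVec (Gp Γ V) k V r q * Ucheck Θ Γ V r q)
  + (∑ r, pCov (Gp Γ V) k (Qp Θ Γ V) r q * Wp V r q)
  - (∑ r, ∑ s, ∑ m, (Rp (Gp Γ V) s r m k q * V m q
      - Dp (Gp Γ V) s m r k q * Qp Θ Γ V m q) * Wp V r q * q.2 s)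

/-- v-representation covector field β_k. -/
def betaV (L : Fam n) (ginv : Fin n → Fin n → Pt n → ℝ) (Γ : Conn n) (Φ : Fam n)
    (k : Fin n) (q : Pt n) : ℝ :=
  (∑ r, q.2 r * vCov Γ r (Uv L ginv Γ Φ) k q)
  + (∑ j, Fvec Γ Φ j q * pdv j (Uv L ginv Γ Φ k) q)
  - (∑ j, ∑ r, ∑ s, vCov Γ k L j q * ginv r j q * q.2 s * vCov Γ s L r q)
  - (∑ j, ∑ r, vCov Γ k L j q * ginv r j q * Fcov L Γ Φ r q)
  + (∑ r, Lup L ginv r q * vCov Γ k (Fcov L Γ Φ) r q)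
  + (∑ m, ∑ r, Lup L ginv r q * q.2 m * vCov2 Γ k (fun m' r' => vCov Γ m' L r') m r q)
  - (∑ j, ∑ r, ∑ s, Lup L ginv r q * vCov Γ k L j q * ginv s j q * pdv s (Fcov L Γ Φ r) q)
  - (∑ j, ∑ m, ∑ r, ∑ s, Lup L ginv r q * vCov Γ k L j q * ginv s j q * q.2 m
      * pdv s (vCov Γ m L r) q)
  - (∑ r, ∑ s, ∑ m, Rv Γ s r m k q * q.2 m * Lup L ginv r q * L s q)
  + (∑ j, ∑ r, ∑ s, ∑ m, ∑ a, ginv a j q * vCov Γ k L j q * Dv Γ s m r a q * q.2 m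
      * Lup L ginv r q * L s q)
  + (∑ r, ∑ s, ∑ m, ∑ a, ginv a m q * Dv Γ s r k a q * Fcov L Γ Φ m q
      * Lup L ginv r q * L s q)

/-- v-representation covector field η_k = β_k − Σ_s U_k α^s L_s / |L|². -/
def etaV (L : Fam n) (ginv : Fin n → Fin n → Pt n → ℝ) (Γ : Conn n) (Φ : Fam n)
    (k : Fin n) (q : Pt n) : ℝ :=
  betaV L ginv Γ Φ k q
    - ∑ s, Uv L ginv Γ Φ k q * alphaV L ginv Γ Φ s q * L s q / L2 L ginv q

/-- p-representation tensor Ǎ^{rs} = ∂W^s/∂p_r. -/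
def Acheck (V : Fam n) (r s : Fin n) (q : Pt n) : ℝ := pdv r (Wp V s) q

/-- v-representation tensor A^{rs} = Σ_q g^{qr} ∂L^s/∂v^q. -/
def Av (L : Fam n) (ginv : Fin n → Fin n → Pt n → ℝ) (r s : Fin n) (q : Pt n) : ℝ :=
  ∑ j, ginv j r q * pdv j (Lup L ginv s) q

/-- p-representation tensor B̌^r_s. -/
def Bcheck (Θ : Fam n) (Γ : Conn n) (V : Fam n) (r s : Fin n) (q : Pt n) : ℝ :=
  pdv r (Ucheck Θ Γ V s) q
  + (∑ m, ∑ k, Wp V k q * q.2 m * Dp (Gp Γ V) m r k s q)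
  - pVec (Gp Γ V) s (Wp V) r q
  + (∑ m, (pdv m (Wp V r) q - pdv r (Wp V m) q) * Ucheck Θ Γ V s q * q.2 m / Omga V q)

/-- v-representation tensor B^r_s. -/
def Bv (L : Fam n) (ginv : Fin n → Fin n → Pt n → ℝ) (Γ : Conn n) (Φ : Fam n)
    (r s : Fin n) (q : Pt n) : ℝ :=
  (∑ j, ginv j r q * pdv j (Uv L ginv Γ Φ s) q)
  + (∑ m, ∑ k, ∑ j, ginv j r q * Lup L ginv k q * L m q * Dv Γ m k s j q)
  - vVec Γ s (Lup L ginv) r q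
  + (∑ j, ∑ k, vCov Γ s L k q * ginv j k q * pdv j (Lup L ginv r) q)
  + (∑ j, ∑ m, (ginv j m q * pdv j (Lup L ginv r) q - ginv j r q * pdv j (Lup L ginv m) q)
      * Uv L ginv Γ Φ s q * L m q / L2 L ginv q)

/-- p-representation tensor Č_{rs}. -/
def Ccheck (Θ : Fam n) (Γ : Conn n) (V : Fam n) (r s : Fin n) (q : Pt n) : ℝ :=
  pCov (Gp Γ V) r (Ucheck Θ Γ V) s q
  - (∑ m, (Ucheck Θ Γ V r q * pdv m (Ucheck Θ Γ V s) q
      + Ucheck Θ Γ V s q * pVec (Gp Γ V) r (Wp V) m q) * q.2 m / Omga V q)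
  - (∑ k, ∑ j, ((∑ m, Dp (Gp Γ V) m j k s q * Ucheck Θ Γ V r q * q.2 m / Omga V q)
      + Rp (Gp Γ V) j k r s q / 2) * Wp V k q * q.2 j)

/-- v-representation tensor C_{rs}. -/
def Cv (L : Fam n) (ginv : Fin n → Fin n → Pt n → ℝ) (Γ : Conn n) (Φ : Fam n)
    (r s : Fin n) (q : Pt n) : ℝ :=
  vCov Γ r (Uv L ginv Γ Φ) s q
  - (∑ j, ∑ k, vCov Γ r L j q * ginv k j q * pdv k (Uv L ginv Γ Φ s) q)
  - (∑ m, Uv L ginv Γ Φ s q * vVec Γ r (Lup L ginv) m q * L m q / L2 L ginv q)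
  - (∑ j, ∑ m, Uv L ginv Γ Φ r q * ginv j m q * pdv j (Uv L ginv Γ Φ s) q * L m q
      / L2 L ginv q)
  + (∑ m, ∑ j, ∑ k, Uv L ginv Γ Φ s q * vCov Γ r L k q * ginv j k q
      * pdv j (Lup L ginv m) q * L m q / L2 L ginv q)
  - (∑ k, ∑ j, ∑ m, ∑ a, ginv a j q * Dv Γ m k s a q * Uv L ginv Γ Φ r q * L m q
      * Lup L ginv k q * L j q / L2 L ginv q)
  - (∑ k, ∑ j, (Rv Γ j k r s q / 2) * Lup L ginv k q * L j q)
  - (∑ k, ∑ j, ∑ m, ∑ a, vCov Γ r L m q * Dv Γ j k s a q * ginv a m q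
      * Lup L ginv k q * L j q)

/-- Gauge-transformed connection Γ' = Γ + T. -/
def addT (Γ T : Conn n) : Conn n := fun k i j q => Γ k i j q + T k i j q

/-- The quantity Ξ_{rs} appearing in the gauge transformation rule for C. -/
def XiG (L : Fam n) (ginv : Fin n → Fin n → Pt n → ℝ) (Γ : Conn n) (Φ : Fam n)
    (T : Conn n) (r s : Fin n) (q : Pt n) : ℝ :=
  (∑ j, ∑ b, ∑ m, T b r j q * L b q * Pv L ginv j m q * Bv L ginv Γ Φ m s q)
  + (∑ j, ∑ b, ∑ m, ∑ a, ∑ c, ∑ e, T b r j q * L b q * Pv L ginv j m q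
      * Av L ginv m a q * Pv L ginv c a q * T e s c q * L e q)

end

/-!
Differentiating `V ∘ λ = pr₂` at `(x, v)` shows that `∂V^s/∂p_k ∘ λ` is a left inverse of
`g_{rk} = ∂L_r/∂v^k`, hence equals `g^{sk}`, and that `∂V^s/∂x^m ∘ λ = -g^{sk} ∂L_k/∂x^m`.
Substituting these into `Ǔ_i ∘ λ`, the terms `Γ^k_{ij} v^j L_k` of `Q_i` and of `∇_i V^s p_s`
cancel and `Ǔ_i ∘ λ = Θ_i ∘ λ - L^k ∂L_k/∂x^i + L^j Γ^b_{ij} L_b`. In `U_i` the terms quadratic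
in `v` cancel against the force, and `L^j g_{jb} = L_b` cancels the mixed terms `v Γ L`,
leaving the same expression once `Θ_i ∘ λ` is written out.
-/

section

variable {n : ℕ}

theorem fderiv_apply_eq_sum_pdx_add_sum_pdv (f : Pt n → ℝ) (z : Pt n) (u y : Fin n → ℝ) :
    fderiv ℝ f z (u, y) = ∑ m, u m * pdx m f z + ∑ k, y k * pdv k f z := by
  have hdecomp : ((u, y) : Pt n) =
      ∑ m, u m • ((Pi.single m 1, 0) : Pt n) + ∑ k, y k • ((0, Pi.single k 1) : Pt n) := by
    ext j <;> simp [Prod.fst_sum, Prod.snd_sum, Finset.sum_apply, Pi.single_apply]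
  rw [hdecomp, map_add, map_sum, map_sum]
  simp only [map_smul, smul_eq_mul, pdx, pdv]

variable {L V : Fam n} {ginv : Fin n → Fin n → Pt n → ℝ}

theorem hasFDerivAt_lam {q : Pt n} (hL : ∀ i, DifferentiableAt ℝ (L i) q) :
    HasFDerivAt (lam L) ((ContinuousLinearMap.fst ℝ _ _).prod
      (ContinuousLinearMap.pi fun k => fderiv ℝ (L k) q)) q :=
  hasFDerivAt_fst.prodMk (hasFDerivAt_pi.mpr fun k => (hL k).hasFDerivAt)

theorem fderiv_inverse_apply_lam {q : Pt n} (hL : ∀ i, DifferentiableAt ℝ (L i) q)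
    (hV : ∀ i, DifferentiableAt ℝ (V i) (lam L q)) (hLeft : ∀ q, lamInv V (lam L q) = q)
    (s : Fin n) (u w : Fin n → ℝ) :
    fderiv ℝ (V s) (lam L q) (u, fun k => fderiv ℝ (L k) q (u, w)) = w s := by
  have hcomp := (hV s).hasFDerivAt.comp q (hasFDerivAt_lam hL)
  have hproj : V s ∘ lam L = fun z : Pt n => z.2 s := by
    funext z
    simpa [lamInv] using congrArg (fun t : Pt n => t.2 s) (hLeft z)
  rw [hproj] at hcomp
  have hsnd : HasFDerivAt (fun z : Pt n => z.2 s)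
      ((ContinuousLinearMap.proj s).comp (ContinuousLinearMap.snd ℝ _ _)) q :=
    ((ContinuousLinearMap.proj s).comp
      (ContinuousLinearMap.snd ℝ (Fin n → ℝ) (Fin n → ℝ))).hasFDerivAt
  simpa using congrArg (fun T : Pt n →L[ℝ] ℝ => T (u, w)) (hcomp.unique hsnd)

theorem pdv_inverse_apply_lam {q : Pt n} (hL : ∀ i, DifferentiableAt ℝ (L i) q)
    (hV : ∀ i, DifferentiableAt ℝ (V i) (lam L q)) (hLeft : ∀ q, lamInv V (lam L q) = q)
    (hginv : ∀ s k, ∑ r, ginv s r q * gdn L r k q = kron s k) (s k : Fin n) :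
    pdv k (V s) (lam L q) = ginv s k q := by
  let A : Matrix (Fin n) (Fin n) ℝ := .of fun s k => pdv k (V s) (lam L q)
  let G : Matrix (Fin n) (Fin n) ℝ := .of fun r k => gdn L r k q
  let Gi : Matrix (Fin n) (Fin n) ℝ := .of fun s r => ginv s r q
  have hAG : A * G = 1 := by
    ext s b
    have h := fderiv_inverse_apply_lam hL hV hLeft s 0 (Pi.single b 1)
    rw [fderiv_apply_eq_sum_pdx_add_sum_pdv] at h
    simpa [A, G, Matrix.mul_apply, Matrix.one_apply, Pi.single_apply, eq_comm, mul_comm,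
      gdn, pdv] using h
  have hGiG : Gi * G = 1 := by
    ext s b
    simpa [Gi, G, Matrix.mul_apply, Matrix.one_apply, kron] using hginv s b
  have hA : A = Gi := (Matrix.inv_eq_left_inv hAG).symm.trans (Matrix.inv_eq_left_inv hGiG)
  exact congrFun (congrFun hA s) k

theorem pdx_inverse_apply_lam {q : Pt n} (hL : ∀ i, DifferentiableAt ℝ (L i) q)
    (hV : ∀ i, DifferentiableAt ℝ (V i) (lam L q)) (hLeft : ∀ q, lamInv V (lam L q) = q)
    (hginv : ∀ s k, ∑ r, ginv s r q * gdn L r k q = kron s k) (s m : Fin n) :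
    pdx m (V s) (lam L q) = -∑ k, ginv s k q * pdx m (L k) q := by
  have h := fderiv_inverse_apply_lam hL hV hLeft s (Pi.single m 1) 0
  rw [fderiv_apply_eq_sum_pdx_add_sum_pdv] at h
  simp only [pdv_inverse_apply_lam hL hV hLeft hginv, Pi.single_apply, ite_mul, one_mul,
    zero_mul, Finset.sum_ite_eq', Finset.mem_univ, if_true, Pi.zero_apply] at h
  simp only [pdx, mul_comm (ginv s _ q)] at h ⊢
  linarith

theorem sum_Lup_mul_gdn {q : Pt n} (hginv : ∀ s k, ∑ r, ginv s r q * gdn L r k q = kron s k)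
    (b : Fin n) : ∑ j, Lup L ginv j q * gdn L j b q = L b q := by
  simp only [Lup, Finset.sum_mul, mul_assoc]
  rw [Finset.sum_comm]
  simp [← Finset.mul_sum, hginv, kron]

theorem sum_ginv_contract_mul_L (q : Pt n) (X : Fin n → ℝ) :
    ∑ s, (∑ k, ginv s k q * X k) * L s q = ∑ k, Lup L ginv k q * X k := by
  simp only [Lup, Finset.sum_mul]
  rw [Finset.sum_comm]
  exact Finset.sum_congr rfl fun _ _ => Finset.sum_congr rfl fun _ _ => by ring

theorem Ucheck_apply_lam {q : Pt n} (hL : ∀ i, DifferentiableAt ℝ (L i) q)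
    (hV : ∀ i, DifferentiableAt ℝ (V i) (lam L q)) (hLeft : ∀ q, lamInv V (lam L q) = q)
    (hginv : ∀ s k, ∑ r, ginv s r q * gdn L r k q = kron s k) (Θ : Fam n) (Γ : Conn n)
    (i : Fin n) :
    Ucheck Θ Γ V i (lam L q) = Θ i (lam L q) - ∑ k, Lup L ginv k q * pdx i (L k) q
      + ∑ j, Lup L ginv j q * ∑ b, Γ b i j q * L b q := by
  have hVlam : ∀ j, V j (lam L q) = q.2 j := fun j => by
    simpa [lamInv] using congrArg (fun t : Pt n => t.2 j) (hLeft q)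
  have hGp : ∀ k a b, Gp Γ V k a b (lam L q) = Γ k a b q := fun k a b => by
    simp [Gp, hLeft q]
  have hp : ∀ s, (lam L q).2 s = L s q := fun _ => rfl
  have hLΓ : ∑ s, (∑ a, ∑ b, L a q * Γ a i b q * ginv s b q) * L s q
      = ∑ j, Lup L ginv j q * ∑ b, Γ b i j q * L b q := by
    rw [← sum_ginv_contract_mul_L]
    refine Finset.sum_congr rfl fun s _ => congrArg (· * L s q) ?_
    simp only [Finset.mul_sum]
    rw [Finset.sum_comm]
    exact Finset.sum_congr rfl fun _ _ => Finset.sum_congr rfl fun _ _ => by ring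
  have hΓv : ∑ s, (∑ a, Γ s i a q * q.2 a) * L s q = ∑ j, ∑ k, Γ k i j q * q.2 j * L k q := by
    simp only [Finset.sum_mul]
    rw [Finset.sum_comm]
  simp only [Ucheck, Qp, pVec, pS, hVlam, hGp, hp, pdv_inverse_apply_lam hL hV hLeft hginv,
    pdx_inverse_apply_lam hL hV hLeft hginv, add_mul, neg_mul, Finset.sum_add_distrib,
    Finset.sum_neg_distrib, sum_ginv_contract_mul_L, hLΓ, hΓv]
  ring

theorem Uv_apply_eq {q : Pt n} (hginv : ∀ s k, ∑ r, ginv s r q * gdn L r k q = kron s k)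
    (Γ : Conn n) (Φ : Fam n) (i : Fin n) :
    Uv L ginv Γ Φ i q = (∑ s, pdx s (L i) q * q.2 s) + (∑ s, pdv s (L i) q * Φ s q)
      - ∑ k, Lup L ginv k q * pdx i (L k) q + ∑ j, Lup L ginv j q * ∑ b, Γ b i j q * L b q := by
  have hvvΓ : ∑ j, q.2 j * ∑ a, ∑ b, q.2 a * Γ b a j q * pdv b (L i) q
      = ∑ j, pdv j (L i) q * ∑ a, ∑ k, Γ j a k q * q.2 a * q.2 k := by
    simp only [Finset.mul_sum]
    conv_lhs => rw [Finset.sum_comm]; enter [2, a]; rw [Finset.sum_comm]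
    conv_lhs => rw [Finset.sum_comm]
    exact Finset.sum_congr rfl fun _ _ => Finset.sum_congr rfl fun _ _ =>
      Finset.sum_congr rfl fun _ _ => by ring
  have hvLΓ : ∑ j, Lup L ginv j q * ∑ a, ∑ b, q.2 a * Γ b a i q * pdv b (L j) q
      = ∑ j, q.2 j * ∑ b, Γ b j i q * L b q := by
    have hLg := sum_Lup_mul_gdn hginv
    simp only [gdn] at hLg
    calc _ = ∑ a, q.2 a * ∑ b, Γ b a i q * ∑ j, Lup L ginv j q * pdv b (L j) q := by
          simp only [Finset.mul_sum]
          rw [Finset.sum_comm]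
          refine Finset.sum_congr rfl fun a _ => ?_
          rw [Finset.sum_comm]
          exact Finset.sum_congr rfl fun b _ => Finset.sum_congr rfl fun j _ => by ring
      _ = _ := by simp only [hLg]
  have hxv : ∑ j, q.2 j * pdx j (L i) q = ∑ s, pdx s (L i) q * q.2 s :=
    Finset.sum_congr rfl fun _ _ => mul_comm _ _
  simp only [Uv, vCov, vS, Fcov, Fvec, gdn, mul_sub, mul_add, Finset.sum_sub_distrib,
    Finset.sum_add_distrib, hvvΓ, hvLΓ, hxv]
  ring

end

theorem stmt4_general
    (n : ℕ)
    (L V : Fam n) (ginv : Fin n → Fin n → Pt n → ℝ)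
    (hL : ∀ i, ContDiff ℝ (⊤ : ℕ∞) (L i))
    (hV : ∀ i, ContDiff ℝ (⊤ : ℕ∞) (V i))
    (hLeft : ∀ q : Pt n, lamInv V (lam L q) = q)
    (hginv : ∀ (q : Pt n) (s k : Fin n), (∑ r, ginv s r q * gdn L r k q) = kron s k)
    (Γ : Conn n)
    (Φ : Fam n)
    (Θ : Fam n)
    (hΘdef : ∀ (q : Pt n) (i : Fin n),
      Θ i (lam L q) = (∑ s, pdx s (L i) q * q.2 s) + (∑ s, pdv s (L i) q * Φ s q)) :
    ∀ (q : Pt n) (i : Fin n),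
      Ucheck Θ Γ V i (lam L q) = Uv L ginv Γ Φ i q := by
  intro q i
  have hLd : ∀ i, DifferentiableAt ℝ (L i) q := fun i => (hL i).differentiable (by simp) q
  have hVd : ∀ i, DifferentiableAt ℝ (V i) (lam L q) :=
    fun i => (hV i).differentiable (by simp) _
  rw [Ucheck_apply_lam hLd hVd hLeft (hginv q), hΘdef, Uv_apply_eq (hginv q)]

theorem stmt4
    (n : ℕ) (hn : 2 ≤ n)
    (L V : Fam n) (ginv : Fin n → Fin n → Pt n → ℝ)
    (hL : ∀ i, ContDiff ℝ (⊤ : ℕ∞) (L i))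
    (hV : ∀ i, ContDiff ℝ (⊤ : ℕ∞) (V i))
    (hginvSm : ∀ i j, ContDiff ℝ (⊤ : ℕ∞) (ginv i j))
    (hLeft : ∀ q : Pt n, lamInv V (lam L q) = q)
    (hRight : ∀ q : Pt n, lam L (lamInv V q) = q)
    (hginv : ∀ (q : Pt n) (s k : Fin n), (∑ r, ginv s r q * gdn L r k q) = kron s k)
    (Γ : Conn n)
    (hΓ : ∀ k i j, ContDiff ℝ (⊤ : ℕ∞) (Γ k i j))
    (hΓsym : ∀ (k i j : Fin n) (q : Pt n), Γ k i j q = Γ k j i q)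
    (Φ : Fam n) (hΦ : ∀ i, ContDiff ℝ (⊤ : ℕ∞) (Φ i))
    (Θ : Fam n) (hΘ : ∀ i, ContDiff ℝ (⊤ : ℕ∞) (Θ i))
    (hΘdef : ∀ (q : Pt n) (i : Fin n),
      Θ i (lam L q) = (∑ s, pdx s (L i) q * q.2 s) + (∑ s, pdv s (L i) q * Φ s q)) :
    ∀ (q : Pt n) (i : Fin n),
      Ucheck Θ Γ V i (lam L q) = Uv L ginv Γ Φ i q :=
  stmt4_general n L V ginv hL hV hLeft hginv Γ Φ Θ hΘdef
end

section
/- For all indices k, r, i, j and every point (x,v): Ř^k_{rij}(x, L(x,v)) = R^k_{rij}(x,v) + Σ_{q,s} (∇_i L_q) g^{sq} D^k_{jrs} − Σ_{q,s} (∇_j L_q) g^{sq} D^k_{irs}, where D^k_{jrs} = −∂Γ^k_{rj}/∂v^s and D^k_{irs} = −∂Γ^k_{ri}/∂v^s in accordance with the definition D^k_{rij} = −∂Γ^k_{ir}/∂v^j. -/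
/-! The p-representation connection is `Γ ∘ λ⁻¹`, so the chain rule at `λ(x,v)` gives
`∂Γ̌/∂p_m = g^{bm} ∂Γ/∂v^b` and `∂Γ̌/∂x^m = ∂Γ/∂x^m − g^{ba} (∂L_a/∂x^m) ∂Γ/∂v^b`.
Substituted into `Ř`, these corrections recombine into the `D`-terms through
`∇_i L_a = ∂L_a/∂x^i − v^c Γ^b_{ci} g_{ab} − Γ^b_{ia} L_b` and `g^{sa} g_{ab} = δ^s_b`; the
`v^s Γ^m_{is} ∂Γ/∂v^m` terms of `R` cancel against the vertical part `v^c Γ^b_{ci} g_{ab}`. -/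

section LegendreCurvature

variable {n : ℕ}

lemma sum_kron_mul (f : Fin n → ℝ) (b : Fin n) : ∑ s, kron s b * f s = f b := by
  simp [kron]

lemma sum_mul_eq_kron_comm {A B : Fin n → Fin n → ℝ}
    (h : ∀ s k, ∑ r, A s r * B r k = kron s k) (a s : Fin n) :
    ∑ r, B a r * A r s = kron a s := by
  have hAB : Matrix.of A * Matrix.of B = 1 := by
    ext s k
    simpa [Matrix.mul_apply, Matrix.one_apply, kron] using h s k
  have hBA := mul_eq_one_comm.mp hAB
  have hBAas := congrFun (congrFun hBA a) s
  simpa [Matrix.mul_apply, Matrix.one_apply, kron] using hBAas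

lemma fderiv_apply_eq_sum_pdx_add_sum_pdv_s5 (F : Pt n → ℝ) (q : Pt n) (ξ η : Fin n → ℝ) :
    fderiv ℝ F q (ξ, η) = (∑ i, ξ i * pdx i F q) + ∑ b, η b * pdv b F q := by
  have hdecomp : ((ξ, η) : Pt n)
      = ∑ i, (ξ i • ((Pi.single i 1, 0) : Pt n) + η i • ((0, Pi.single i 1) : Pt n)) := by
    ext x <;> simp [Prod.fst_sum, Prod.snd_sum, Pi.single_apply]
  rw [hdecomp, map_sum]
  simp only [map_add, map_smul, smul_eq_mul, Finset.sum_add_distrib, pdx, pdv]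

section ChainRule

variable {L : Fam n} {G : Pt n → ℝ} {q : Pt n}

lemma fderiv_comp_lam_apply (hL : ∀ s, DifferentiableAt ℝ (L s) q)
    (hG : DifferentiableAt ℝ G (lam L q)) (w : Pt n) :
    fderiv ℝ (G ∘ lam L) q w = fderiv ℝ G (lam L q) (w.1, fun s => fderiv ℝ (L s) q w) := by
  have hlam : HasFDerivAt (lam L)
      ((ContinuousLinearMap.fst ℝ (Fin n → ℝ) (Fin n → ℝ)).prod
        (ContinuousLinearMap.pi fun s => fderiv ℝ (L s) q)) q :=
    hasFDerivAt_fst.prodMk (hasFDerivAt_pi.2 fun s => (hL s).hasFDerivAt)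
  rw [(hG.hasFDerivAt.comp q hlam).fderiv]
  rfl

lemma pdx_comp_lam (hL : ∀ s, DifferentiableAt ℝ (L s) q)
    (hG : DifferentiableAt ℝ G (lam L q)) (m : Fin n) :
    pdx m (G ∘ lam L) q = pdx m G (lam L q) + ∑ s, pdx m (L s) q * pdv s G (lam L q) := by
  rw [pdx, fderiv_comp_lam_apply hL hG, fderiv_apply_eq_sum_pdx_add_sum_pdv_s5]
  simp [pdx, Pi.single_apply]

lemma pdv_comp_lam (hL : ∀ s, DifferentiableAt ℝ (L s) q)
    (hG : DifferentiableAt ℝ G (lam L q)) (m : Fin n) :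
    pdv m (G ∘ lam L) q = ∑ s, gdn L s m q * pdv s G (lam L q) := by
  rw [pdv, fderiv_comp_lam_apply hL hG, fderiv_apply_eq_sum_pdx_add_sum_pdv_s5]
  simp [gdn, pdv]

end ChainRule

section InverseChainRule

variable {L V : Fam n} {ginv : Fin n → Fin n → Pt n → ℝ} {F : Pt n → ℝ} {q : Pt n}

lemma comp_lamInv_comp_lam (hLeft : ∀ q : Pt n, lamInv V (lam L q) = q) :
    (fun p => F (lamInv V p)) ∘ lam L = F :=
  funext fun q => congrArg F (hLeft q)

lemma differentiable_comp_lamInv (hV : ∀ s, Differentiable ℝ (V s)) (hF : Differentiable ℝ F) :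
    Differentiable ℝ (fun p => F (lamInv V p)) :=
  hF.comp (differentiable_fst.prodMk (differentiable_pi.2 hV))

variable (hL : ∀ s, Differentiable ℝ (L s)) (hV : ∀ s, Differentiable ℝ (V s))
  (hF : Differentiable ℝ F) (hLeft : ∀ q : Pt n, lamInv V (lam L q) = q)
  (hginv : ∀ s k, ∑ r, ginv s r q * gdn L r k q = kron s k)
include hL hV hF hLeft hginv

lemma pdv_comp_lamInv (m : Fin n) :
    pdv m (fun p => F (lamInv V p)) (lam L q) = ∑ b, ginv b m q * pdv b F q := by
  have hchain := pdv_comp_lam (fun s => hL s q)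
    (differentiable_comp_lamInv hV hF (lam L q))
  rw [comp_lamInv_comp_lam hLeft] at hchain
  calc pdv m (fun p => F (lamInv V p)) (lam L q)
      = ∑ s, (∑ b, gdn L s b q * ginv b m q) * pdv s (fun p => F (lamInv V p)) (lam L q) := by
        simp only [sum_mul_eq_kron_comm hginv, sum_kron_mul]
    _ = ∑ b, ginv b m q * ∑ s, gdn L s b q * pdv s (fun p => F (lamInv V p)) (lam L q) := by
        simp only [Finset.sum_mul, Finset.mul_sum]
        rw [Finset.sum_comm]
        exact Finset.sum_congr rfl fun _ _ => Finset.sum_congr rfl fun _ _ => by ring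
    _ = ∑ b, ginv b m q * pdv b F q := by simp only [hchain]

lemma pdx_comp_lamInv (m : Fin n) :
    pdx m (fun p => F (lamInv V p)) (lam L q)
      = pdx m F q - ∑ a, ∑ b, ginv b a q * pdx m (L a) q * pdv b F q := by
  have hchain := pdx_comp_lam (fun s => hL s q)
    (differentiable_comp_lamInv hV hF (lam L q)) m
  rw [comp_lamInv_comp_lam hLeft] at hchain
  have hcontract : ∑ s, pdx m (L s) q * pdv s (fun p => F (lamInv V p)) (lam L q)
      = ∑ a, ∑ b, ginv b a q * pdx m (L a) q * pdv b F q := by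
    simp only [pdv_comp_lamInv hL hV hF hLeft hginv, Finset.mul_sum]
    exact Finset.sum_congr rfl fun _ _ => Finset.sum_congr rfl fun _ _ => by ring
  rw [hchain, hcontract, add_sub_cancel_right]

end InverseChainRule

section Contraction

variable {L : Fam n} {ginv : Fin n → Fin n → Pt n → ℝ} {Γ : Conn n} {q : Pt n}
  (hginv : ∀ s k, ∑ r, ginv s r q * gdn L r k q = kron s k)
include hginv

lemma sum_vCov_mul_ginv (i s : Fin n) :
    ∑ a, vCov Γ i L a q * ginv s a q
      = ∑ a, (pdx i (L a) q - ∑ b, Γ b i a q * L b q) * ginv s a q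
        - ∑ c, q.2 c * Γ s c i q := by
  have hvert : ∑ a, (∑ c, ∑ b, q.2 c * Γ b c i q * pdv b (L a) q) * ginv s a q
      = ∑ c, q.2 c * Γ s c i q := by
    calc _ = ∑ c, ∑ b, q.2 c * Γ b c i q * ∑ a, ginv s a q * gdn L a b q := by
          simp only [Finset.sum_mul, Finset.mul_sum]
          rw [Finset.sum_comm]
          refine Finset.sum_congr rfl fun c _ => ?_
          rw [Finset.sum_comm]
          exact Finset.sum_congr rfl fun b _ => Finset.sum_congr rfl fun a _ => by
            rw [gdn]; ring
      _ = ∑ c, q.2 c * Γ s c i q := by simp [hginv, kron]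
  rw [← hvert, ← Finset.sum_sub_distrib]
  exact Finset.sum_congr rfl fun a _ => by simp only [vCov, vS]; ring

-- The right-hand side is the shape these terms take in `Ř` after the chain rule.
lemma sum_vCov_mul_ginv_mul_neg (hΓsym : ∀ k i j, Γ k i j q = Γ k j i q) (i : Fin n)
    (d : Fin n → ℝ) :
    ∑ a, ∑ s, vCov Γ i L a q * ginv s a q * -d s
      = -(∑ a, ∑ b, ginv b a q * pdx i (L a) q * d b)
        + ∑ m, ∑ s, L s q * Γ s m i q * ∑ b, ginv b m q * d b
        + ∑ m, ∑ s, q.2 s * Γ m i s q * d m := by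
  have hpdx : ∑ a, ∑ b, ginv b a q * pdx i (L a) q * d b
      = ∑ s, ∑ a, pdx i (L a) q * ginv s a q * d s := by
    rw [Finset.sum_comm]
    exact Finset.sum_congr rfl fun _ _ => Finset.sum_congr rfl fun _ _ => by ring
  have hconn : ∑ m, ∑ s, L s q * Γ s m i q * ∑ b, ginv b m q * d b
      = ∑ s, ∑ a, (∑ b, Γ b i a q * L b q) * ginv s a q * d s := by
    simp only [Finset.mul_sum, Finset.sum_mul]
    rw [Finset.sum_congr rfl fun _ _ => Finset.sum_comm, Finset.sum_comm]
    refine Finset.sum_congr rfl fun s _ => Finset.sum_congr rfl fun a _ => ?_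
    exact Finset.sum_congr rfl fun b _ => by rw [hΓsym b a i]; ring
  have hvert : ∑ m, ∑ s, q.2 s * Γ m i s q * d m = ∑ s, (∑ c, q.2 c * Γ s c i q) * d s :=
    Finset.sum_congr rfl fun m _ => by
      rw [Finset.sum_mul]
      exact Finset.sum_congr rfl fun c _ => by rw [hΓsym m i c]
  rw [Finset.sum_comm, hpdx, hconn, hvert, ← Finset.sum_neg_distrib, ← Finset.sum_add_distrib,
    ← Finset.sum_add_distrib]
  refine Finset.sum_congr rfl fun s _ => ?_
  rw [← Finset.sum_mul, sum_vCov_mul_ginv hginv]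
  simp only [sub_mul, Finset.sum_sub_distrib, ← Finset.sum_mul]
  ring

end Contraction

end LegendreCurvature

theorem stmt5_general
    (n : ℕ)
    (L V : Fam n) (ginv : Fin n → Fin n → Pt n → ℝ)
    (hL : ∀ i, ContDiff ℝ (⊤ : ℕ∞) (L i))
    (hV : ∀ i, ContDiff ℝ (⊤ : ℕ∞) (V i))
    (hLeft : ∀ q : Pt n, lamInv V (lam L q) = q)
    (hginv : ∀ (q : Pt n) (s k : Fin n), (∑ r, ginv s r q * gdn L r k q) = kron s k)
    (Γ : Conn n)
    (hΓ : ∀ k i j, ContDiff ℝ (⊤ : ℕ∞) (Γ k i j))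
    (hΓsym : ∀ (k i j : Fin n) (q : Pt n), Γ k i j q = Γ k j i q) :
    ∀ (q : Pt n) (k r i j : Fin n),
      Rp (Gp Γ V) k r i j (lam L q)
        = Rv Γ k r i j q
          + (∑ a, ∑ s, vCov Γ i L a q * ginv s a q * Dv Γ k j r s q)
          - (∑ a, ∑ s, vCov Γ j L a q * ginv s a q * Dv Γ k i r s q) := by
  intro q k r i j
  have hLd : ∀ s, Differentiable ℝ (L s) := fun s => (hL s).differentiable (by simp)
  have hVd : ∀ s, Differentiable ℝ (V s) := fun s => (hV s).differentiable (by simp)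
  have hΓd : ∀ a b c, Differentiable ℝ (Γ a b c) := fun a b c =>
    (hΓ a b c).differentiable (by simp)
  have hDv : ∀ a b s, Dv Γ k a b s q = -pdv s (Γ k a b) q := fun a b s => by
    rw [Dv, funext (hΓsym k b a)]
  have hGp : ∀ a b c, Gp Γ V a b c = fun p => Γ a b c (lamInv V p) := fun _ _ _ => rfl
  simp only [Rp, hGp, pdx_comp_lamInv hLd hVd (hΓd _ _ _) hLeft (hginv q),
    pdv_comp_lamInv hLd hVd (hΓd _ _ _) hLeft (hginv q), hLeft, hDv,
    sum_vCov_mul_ginv_mul_neg (hginv q) (hΓsym · · · q)]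
  simp only [lam, Rv]
  ring

theorem stmt5
    (n : ℕ) (hn : 2 ≤ n)
    (L V : Fam n) (ginv : Fin n → Fin n → Pt n → ℝ)
    (hL : ∀ i, ContDiff ℝ (⊤ : ℕ∞) (L i))
    (hV : ∀ i, ContDiff ℝ (⊤ : ℕ∞) (V i))
    (hginvSm : ∀ i j, ContDiff ℝ (⊤ : ℕ∞) (ginv i j))
    (hLeft : ∀ q : Pt n, lamInv V (lam L q) = q)
    (hRight : ∀ q : Pt n, lam L (lamInv V q) = q)
    (hginv : ∀ (q : Pt n) (s k : Fin n), (∑ r, ginv s r q * gdn L r k q) = kron s k)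
    (Γ : Conn n)
    (hΓ : ∀ k i j, ContDiff ℝ (⊤ : ℕ∞) (Γ k i j))
    (hΓsym : ∀ (k i j : Fin n) (q : Pt n), Γ k i j q = Γ k j i q) :
    ∀ (q : Pt n) (k r i j : Fin n),
      Rp (Gp Γ V) k r i j (lam L q)
        = Rv Γ k r i j q
          + (∑ a, ∑ s, vCov Γ i L a q * ginv s a q * Dv Γ k j r s q)
          - (∑ a, ∑ s, vCov Γ j L a q * ginv s a q * Dv Γ k i r s q) :=
  stmt5_general n L V ginv hL hV hLeft hginv Γ hΓ hΓsym
end
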